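/- Let a > 0 and let g : ℝ → ℂ be a Schwartz function. Define (F₁g)(x) = √(a/π) ∫_ℝ g(t)·e^{i a x t} dt. Then for every z ∈ ℂ, [B_{a/2}(F₁g)](z) = √2 · (B_{a/2}g)(i z). -/

import Mathlib

open Complex Real SchwartzMap

/-- The (parametrized) Bargmann transform `B_{a/2}`:
`(B_{a/2}f)(z) = (a/π)^{1/4} ∫_ℝ f(x) e^{axz − (a/2)x² − (a/4)z²} dx`. -/
noncomputable def bargmann (a : ℝ) (f : ℝ → ℂ) (z : ℂ) : ℂ :=
  ((a / Real.pi) ^ ((1 : ℝ) / 4) : ℝ) *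
    ∫ x : ℝ, f x * Complex.exp (a * x * z - (a / 2) * x ^ 2 - (a / 4) * z ^ 2)

/-- The generalized Fourier transform `(F₁ g)(x) = √(a/π) ∫ g(t) e^{iaxt} dt`. -/
noncomputable def fourierOne (a : ℝ) (g : ℝ → ℂ) (x : ℝ) : ℂ :=
  (Real.sqrt (a / Real.pi) : ℂ) * ∫ t : ℝ, g t * Complex.exp (Complex.I * a * x * t)

/-!
Expanding `F₁ g`, Fubini exchanges the two integrals: the integrand is dominated by `|g t|` times
a Gaussian in `x`. The inner integral over `x` is then a complex Gaussian integral, equal to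
`√(2π/a)` times the Bargmann kernel at `i z`, and the constants combine as
`√(a/π) √(2π/a) = √2`.
-/

open MeasureTheory

noncomputable def bargmannKernel (a : ℝ) (z : ℂ) (x : ℝ) : ℂ :=
  cexp (a * x * z - (a / 2) * x ^ 2 - (a / 4) * z ^ 2)

lemma bargmann_eq_integral_mul_bargmannKernel (a : ℝ) (f : ℝ → ℂ) (z : ℂ) :
    bargmann a f z = ((a / π) ^ ((1 : ℝ) / 4) : ℝ) * ∫ x : ℝ, f x * bargmannKernel a z x :=
  rfl

lemma bargmannKernel_eq_cexp_quadratic (a : ℝ) (z : ℂ) (x : ℝ) :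
    bargmannKernel a z x = cexp ((-(a / 2) : ℂ) * x ^ 2 + a * z * x + -(a / 4) * z ^ 2) := by
  rw [bargmannKernel]
  ring_nf

lemma integrable_bargmannKernel {a : ℝ} (ha : 0 < a) (z : ℂ) :
    Integrable (bargmannKernel a z) := by
  simp_rw [funext (bargmannKernel_eq_cexp_quadratic a z)]
  exact integrable_cexp_quadratic' (by simpa using ha) _ _

lemma integral_cexp_mul_bargmannKernel {a : ℝ} (ha : 0 < a) (z : ℂ) (t : ℝ) :
    ∫ x : ℝ, cexp (I * a * x * t) * bargmannKernel a z x =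
      (√(2 * π / a) : ℝ) * bargmannKernel a (I * z) t := by
  have hquad (x : ℝ) : cexp (I * a * x * t) * bargmannKernel a z x =
      cexp ((-(a / 2) : ℂ) * x ^ 2 + (a * z + I * a * t) * x + -(a / 4) * z ^ 2) := by
    rw [bargmannKernel_eq_cexp_quadratic, ← Complex.exp_add]
    ring_nf
  simp_rw [hquad]
  rw [integral_cexp_quadratic (by simpa using ha), bargmannKernel]
  congr 1
  · rw [Real.sqrt_eq_rpow, Complex.ofReal_cpow (by positivity)]
    push_cast
    congr 1
    field_simp
  · congr 1
    field_simp
    ring_nf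
    rw [I_sq]
    ring

lemma sqrt_div_pi_mul_sqrt_two_pi_div {a : ℝ} (ha : 0 < a) :
    √(a / π) * √(2 * π / a) = √2 := by
  rw [← Real.sqrt_mul (by positivity)]
  congr 1
  field_simp

lemma integral_mul_integral_cexp_swap {f K : ℝ → ℂ} (hf : Integrable f) (hK : Integrable K)
    (c : ℝ) :
    ∫ x : ℝ, (∫ t : ℝ, f t * cexp (I * c * x * t)) * K x =
      ∫ t : ℝ, f t * ∫ x : ℝ, cexp (I * c * x * t) * K x := by
  have hprod : Integrable (Function.uncurry fun x t : ℝ => cexp (I * c * x * t) * (K x * f t))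
      (volume.prod volume) := by
    refine (hK.mul_prod hf).bdd_mul (c := 1) (by fun_prop) (ae_of_all _ fun p => ?_)
    simp [norm_exp]
  calc ∫ x : ℝ, (∫ t : ℝ, f t * cexp (I * c * x * t)) * K x
      = ∫ x : ℝ, ∫ t : ℝ, cexp (I * c * x * t) * (K x * f t) := by
        refine integral_congr_ae (ae_of_all _ fun x => ?_)
        simp only [← integral_mul_const]
        congr 1 with t
        ring
    _ = ∫ t : ℝ, ∫ x : ℝ, cexp (I * c * x * t) * (K x * f t) := integral_integral_swap hprod
    _ = ∫ t : ℝ, f t * ∫ x : ℝ, cexp (I * c * x * t) * K x := by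
        refine integral_congr_ae (ae_of_all _ fun t => ?_)
        simp only [← integral_const_mul]
        congr 1 with x
        ring

theorem bargmann_fourierOne {a : ℝ} (ha : 0 < a) {g : ℝ → ℂ} (hg : Integrable g) (z : ℂ) :
    bargmann a (fourierOne a g) z = (√2 : ℝ) * bargmann a g (I * z) := by
  have hswap := integral_mul_integral_cexp_swap hg (integrable_bargmannKernel ha z) a
  simp only [integral_cexp_mul_bargmannKernel ha, mul_left_comm (g _), integral_const_mul]
    at hswap
  simp only [bargmann_eq_integral_mul_bargmannKernel, fourierOne,
    mul_assoc _ _ (bargmannKernel _ _ _), integral_const_mul]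
  rw [hswap, ← sqrt_div_pi_mul_sqrt_two_pi_div ha]
  push_cast
  ring

/-- For a Schwartz function `g`, the Bargmann transform of its Fourier transform is
`[B_{a/2}(F₁ g)](z) = √2 · (B_{a/2} g)(iz)`. -/
theorem bargmann_fourier (a : ℝ) (ha : 0 < a) (g : SchwartzMap ℝ ℂ) (z : ℂ) :
    bargmann a (fourierOne a (fun x : ℝ => g x)) z =
      (Real.sqrt 2 : ℂ) * bargmann a (fun x : ℝ => g x) (Complex.I * z) :=
  bargmann_fourierOne ha g.integrable z
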